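/- arXiv:1412.7685 — 4 statements merged into one kernel-verified Lean document; each statement's English description precedes it below -/
import Mathlib

section
/- Let G be a nonabelian group generated by two elements x, y satisfying x y x^{-1} = y^{1+p^k} for some k ≥ 1, and let θ: G → Z_p^× be a homomorphism with θ(x) = 1 + p^k and θ(y) = 1. Then for every g ∈ ker(θ) and every h ∈ G, one has h g h^{-1} = g^{θ(h)}; that is, G is θ-abelian. -/
/-!
Write `g ^ a` for `P g a`. Since `ℕ` is dense in `ℤ_[p]`, these `p`-adic powers obey the usual
exponent laws, stay in every closed subgroup containing `g`, and the relation `x y x⁻¹ = y ^ θ(x)`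
propagates to `x ^ a * y ^ c * x ^ (-a) = y ^ (θ(x ^ a) c)`. Hence the compact set of products
`x ^ a * y ^ c` is a subgroup; it contains `x` and `y`, so it is all of `G`. As `θ y = 1`, such a
product lies in `ker θ` only if `x ^ a` does; for `a = u p ^ v ≠ 0` with `u` a unit this would
give `x ^ p ^ v ∈ ker θ`, i.e. `(1 + p ^ k) ^ p ^ v = 1`. So `ker θ` consists of the `y ^ c`, and
conjugating `y ^ c` by `h = x ^ b * y ^ d` gives `y ^ (θ(h) c)`.
-/

open PadicInt

structure IsPadicZPow {p : ℕ} [Fact p.Prime] {G : Type*} [Group G] [TopologicalSpace G]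
    (P : G → ℤ_[p] → G) : Prop where
  continuous : ∀ g, Continuous (P g)
  intCast : ∀ (g : G) (n : ℤ), P g n = g ^ n

namespace IsPadicZPow

variable {p : ℕ} [Fact p.Prime] {G : Type*} [Group G] [TopologicalSpace G] {P : G → ℤ_[p] → G}

theorem natCast (hP : IsPadicZPow P) (g : G) (n : ℕ) : P g n = g ^ n := by
  simpa using hP.intCast g n

theorem zero (hP : IsPadicZPow P) (g : G) : P g 0 = 1 := by simpa using hP.natCast g 0

theorem one (hP : IsPadicZPow P) (g : G) : P g 1 = g := by simpa using hP.natCast g 1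

theorem mem_of_isClosed (hP : IsPadicZPow P) {K : Subgroup G} (hK : IsClosed (K : Set G))
    {g : G} (hg : g ∈ K) (a : ℤ_[p]) : P g a ∈ K :=
  denseRange_natCast.induction_on a (hK.preimage (hP.continuous g)) fun n => by
    rw [hP.natCast]
    exact K.pow_mem hg n

variable [IsTopologicalGroup G] [T2Space G]

theorem add (hP : IsPadicZPow P) (g : G) (a b : ℤ_[p]) : P g (a + b) = P g a * P g b := by
  have := hP.continuous g
  refine denseRange_natCast.induction_on a (isClosed_eq (by fun_prop) (by fun_prop)) fun m => ?_
  refine denseRange_natCast.induction_on b (isClosed_eq (by fun_prop) (by fun_prop)) fun n => ?_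
  rw [← Nat.cast_add, hP.natCast, hP.natCast, hP.natCast, pow_add]

theorem neg (hP : IsPadicZPow P) (g : G) (a : ℤ_[p]) : P g (-a) = (P g a)⁻¹ :=
  eq_inv_of_mul_eq_one_right <| by rw [← hP.add, add_neg_cancel, hP.zero]

theorem commute (hP : IsPadicZPow P) (g : G) (a b : ℤ_[p]) : Commute (P g a) (P g b) := by
  rw [Commute, SemiconjBy, ← hP.add, ← hP.add, add_comm]

theorem mul (hP : IsPadicZPow P) (g : G) (a b : ℤ_[p]) : P (P g a) b = P g (a * b) := by
  have := hP.continuous g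
  have := hP.continuous (P g a)
  refine denseRange_natCast.induction_on b (isClosed_eq (by fun_prop) (by fun_prop)) fun n => ?_
  rw [hP.natCast]
  refine denseRange_natCast.induction_on a (isClosed_eq (by fun_prop) (by fun_prop)) fun m => ?_
  rw [← Nat.cast_mul, hP.natCast, hP.natCast, pow_mul]

theorem conj (hP : IsPadicZPow P) (h g : G) (a : ℤ_[p]) :
    h * P g a * h⁻¹ = P (h * g * h⁻¹) a := by
  have := hP.continuous g
  have := hP.continuous (h * g * h⁻¹)
  refine denseRange_natCast.induction_on a (isClosed_eq (by fun_prop) (by fun_prop)) fun n => ?_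
  rw [hP.natCast, hP.natCast, conj_pow]

theorem exists_pow_mem_of_mem (hP : IsPadicZPow P) {K : Subgroup G} (hK : IsClosed (K : Set G))
    {g : G} {a : ℤ_[p]} (ha : a ≠ 0) (hga : P g a ∈ K) : ∃ n : ℕ, 0 < n ∧ g ^ n ∈ K := by
  refine ⟨p ^ a.valuation, pow_pos (Fact.out : p.Prime).pos _, ?_⟩
  have hpow : a * ↑(unitCoeff ha)⁻¹ = ((p ^ a.valuation : ℕ) : ℤ_[p]) := by
    nth_rw 1 [unitCoeff_spec ha]
    rw [mul_right_comm, Units.mul_inv, one_mul, Nat.cast_pow]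
  rw [← hP.natCast, ← hpow, ← hP.mul]
  exact hP.mem_of_isClosed hK hga _

theorem conj_eq_of_conj_eq (hP : IsPadicZPow P) {x y : G} {t : ℤ_[p]}
    (hxy : x * y * x⁻¹ = P y t) {χ : ℤ_[p] → ℤ_[p]} (hχ : Continuous χ)
    (hχ_natCast : ∀ n : ℕ, χ n = t ^ n) (a c : ℤ_[p]) :
    P x a * P y c * (P x a)⁻¹ = P y (χ a * c) := by
  have hx : ∀ c, x * P y c * x⁻¹ = P y (t * c) := fun c => by rw [hP.conj, hxy, hP.mul]
  have hxpow : ∀ (n : ℕ) c, x ^ n * P y c * (x ^ n)⁻¹ = P y (t ^ n * c) := by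
    intro n
    induction n with
    | zero => simp
    | succ n ih =>
      intro c
      calc x ^ (n + 1) * P y c * (x ^ (n + 1))⁻¹ = x * (x ^ n * P y c * (x ^ n)⁻¹) * x⁻¹ := by
            group
        _ = P y (t ^ (n + 1) * c) := by rw [ih, hx, pow_succ', mul_assoc]
  have := hP.continuous x
  have := hP.continuous y
  refine denseRange_natCast.induction_on a (isClosed_eq (by fun_prop) (by fun_prop)) fun n => ?_
  rw [hP.natCast, hχ_natCast, hxpow]

theorem exists_mul_eq [CompactSpace G] (hP : IsPadicZPow P) {x y : G}
    (hgen : Dense (Subgroup.closure {x, y} : Set G)) {χ : ℤ_[p] → ℤ_[p]}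
    (hconj : ∀ a c, P x a * P y c * (P x a)⁻¹ = P y (χ a * c)) (g : G) :
    ∃ a c, P x a * P y c = g := by
  set S := Set.range fun ac : ℤ_[p] × ℤ_[p] => P x ac.1 * P y ac.2
  have hswap : ∀ a c, P y c * P x a = P x a * P y (χ (-a) * c) := by
    intro a c
    rw [← hconj, hP.neg, inv_inv]
    group
  have hsub : (Subgroup.closure {x, y} : Set G) ⊆ S := fun g hg => by
    induction hg using Subgroup.closure_induction with
    | mem g hg =>
      rcases hg with rfl | rfl
      · exact ⟨(1, 0), by simp [hP.one, hP.zero]⟩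
      · exact ⟨(0, 1), by simp [hP.one, hP.zero]⟩
    | one => exact ⟨(0, 0), by simp [hP.zero]⟩
    | mul g₁ g₂ _ _ h₁ h₂ =>
      obtain ⟨⟨a, c⟩, rfl⟩ := h₁
      obtain ⟨⟨a', c'⟩, rfl⟩ := h₂
      refine ⟨(a + a', χ (-a') * c + c'), ?_⟩
      simp only [hP.add, mul_assoc]
      rw [← mul_assoc (P y c), hswap, mul_assoc]
    | inv g _ hg =>
      obtain ⟨⟨a, c⟩, rfl⟩ := hg
      refine ⟨(-a, χ a * -c), ?_⟩
      simp only [mul_inv_rev, ← hP.neg, hswap, neg_neg]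
  have hS : IsClosed S := by
    have := hP.continuous x
    have := hP.continuous y
    exact (isCompact_range (by fun_prop)).isClosed
  have hSuniv : S = Set.univ := by rw [← hS.closure_eq, (hgen.mono hsub).closure_eq]
  obtain ⟨⟨a, c⟩, hac⟩ := hSuniv ▸ Set.mem_univ g
  exact ⟨a, c, hac⟩

end IsPadicZPow

theorem PadicInt.units_pow_ne_one_of_val_eq_one_add_pow {p : ℕ} [Fact p.Prime] {u : ℤ_[p]ˣ} {k : ℕ}
    (hu : (u : ℤ_[p]) = 1 + (p : ℤ_[p]) ^ k) {n : ℕ} (hn : 0 < n) : u ^ n ≠ 1 := by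
  intro h
  have hval : (((1 + p ^ k) ^ n : ℕ) : ℤ_[p]) = ((1 : ℕ) : ℤ_[p]) := by
    push_cast
    rw [← hu, ← Units.val_pow_eq_pow_val, h, Units.val_one]
  have hp : 0 < p ^ k := pow_pos (Fact.out : p.Prime).pos k
  exact (Nat.one_lt_pow hn.ne' (by omega)).ne' (Nat.cast_injective hval)

theorem stmt_5_general (p : ℕ) [Fact p.Prime] (k : ℕ)
    {G : Type*} [Group G] [TopologicalSpace G] [IsTopologicalGroup G]
    [CompactSpace G] [T2Space G]
    (x y : G)
    (hgen : Dense ((Subgroup.closure {x, y} : Subgroup G) : Set G))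
    (hrel : x * y * x⁻¹ = y ^ (1 + p ^ k))
    (θ : G →* ℤ_[p]ˣ) (hθc : Continuous θ)
    (hθx : ((θ x : ℤ_[p])) = 1 + (p : ℤ_[p]) ^ k)
    (hθy : θ y = 1)
    (P : G → ℤ_[p] → G)
    (hPcont : ∀ g : G, Continuous (P g))
    (hPint : ∀ (g : G) (n : ℤ), P g (n : ℤ_[p]) = g ^ n) :
    ∀ g ∈ θ.ker, ∀ h : G, h * g * h⁻¹ = P g ((θ h : ℤ_[p])) := by
  have hP : IsPadicZPow P := ⟨hPcont, hPint⟩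
  have hker : IsClosed (θ.ker : Set G) := isClosed_singleton.preimage hθc
  have hyker : ∀ c, P y c ∈ θ.ker := hP.mem_of_isClosed hker hθy
  have hconj : ∀ a c, P x a * P y c * (P x a)⁻¹ = P y (θ (P x a) * c) :=
    hP.conj_eq_of_conj_eq (t := θ x) (by rw [hrel, hθx, ← hP.natCast]; push_cast; rfl)
      (Units.continuous_val.comp (hθc.comp (hP.continuous x))) (by simp [hP.natCast])
  intro g hg h
  obtain ⟨a, c, rfl⟩ := hP.exists_mul_eq hgen hconj g
  obtain ⟨b, d, rfl⟩ := hP.exists_mul_eq hgen hconj h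
  obtain rfl : a = 0 := by
    by_contra ha
    obtain ⟨n, hn, hxn⟩ :=
      hP.exists_pow_mem_of_mem hker ha ((Subgroup.mul_mem_cancel_right _ (hyker c)).1 hg)
    exact PadicInt.units_pow_ne_one_of_val_eq_one_add_pow hθx hn (by simpa using hxn)
  have hθ : θ (P x b * P y d) = θ (P x b) := by rw [map_mul, hyker d, mul_one]
  rw [hP.zero, one_mul, hθ, hP.mul, mul_comm c, ← hconj b c]
  calc P x b * P y d * P y c * (P x b * P y d)⁻¹
      = P x b * (P y d * P y c * (P y d)⁻¹) * (P x b)⁻¹ := by group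
    _ = P x b * P y c * (P x b)⁻¹ := by rw [(hP.commute y d c).mul_inv_cancel]

/-- Let `G` be a nonabelian pro-`p` group topologically generated by two elements
`x, y` with `x y x⁻¹ = y^(1+p^k)` (`k ≥ 1`), and let `θ : G → ℤ_pˣ` be a continuous
homomorphism with `θ x = 1 + p^k`, `θ y = 1`.  Let `P g c` denote the `p`-adic power
`g^c` (the unique continuous extension of integral powers).  Then for every
`g ∈ ker θ` and every `h ∈ G` one has `h g h⁻¹ = g^(θ h)`: `G` is `θ`-abelian. -/
theorem stmt_5 (p : ℕ) [Fact p.Prime] (k : ℕ) (hk : 1 ≤ k)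
    {G : Type*} [Group G] [TopologicalSpace G] [IsTopologicalGroup G]
    [CompactSpace G] [T2Space G] [TotallyDisconnectedSpace G]
    (x y : G)
    (hgen : Dense ((Subgroup.closure {x, y} : Subgroup G) : Set G))
    (hrel : x * y * x⁻¹ = y ^ (1 + p ^ k))
    (hnab : ¬ ∀ a b : G, a * b = b * a)
    (θ : G →* ℤ_[p]ˣ) (hθc : Continuous θ)
    (hθx : ((θ x : ℤ_[p])) = 1 + (p : ℤ_[p]) ^ k)
    (hθy : θ y = 1)
    (P : G → ℤ_[p] → G)
    (hPcont : ∀ g : G, Continuous (P g))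
    (hPint : ∀ (g : G) (n : ℤ), P g (n : ℤ_[p]) = g ^ n) :
    ∀ g ∈ θ.ker, ∀ h : G, h * g * h⁻¹ = P g ((θ h : ℤ_[p])) :=
  stmt_5_general p k x y hgen hrel θ hθc hθx hθy P hPcont hPint
end

section
/- Let q = p^k with k ≥ 1, and consider the Iwasawa algebra Z_p[[X]]. Suppose r is an element of a free pro-p group F on generators including x_1 and y, such that r ≡ [x_1,_m y]·[x_1,_{m−1} y]^{a_{m-1}}⋯[x_1,y]^{a_1}·y^{a_0} modulo [N,N] corresponds to a Weierstrass polynomial ℘(X) = X^m + a_{m−1}X^{m−1} + ⋯ + a_0 annihilating y in N^{ab}. If f: F → Z_p(1) is a crossed homomorphism (relative to θ with θ(x_1) = 1 + q, θ(y) = 1) with f(y) = 1 and f(x_1) = 0, then f(r) = ℘(q). In particular, if r ∈ [N,N] (so f(r) = 0) then ℘(q) = 0, i.e., (X − q) divides ℘(X). -/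
/-!
On the kernel of `θ` a crossed homomorphism is additive, and `f ⁅g, h⁆ = (1 - θ h) f g + (θ g - 1) f h`.
Hence each commutator `c (i + 1) = ⁅x₁, c i⁆` lies in the kernel and `f` multiplies by `θ x₁ - 1 = q`
along the sequence, so `f (c i) = q ^ i`, and `f r = q ^ m + ∑ aᵢ qⁱ = ℘(q)`.
-/

open scoped commutatorElement

def IsCrossedHom {G R : Type*} [Group G] [Monoid R] [Add R] (θ : G →* Rˣ) (f : G → R) : Prop :=
  ∀ g h : G, f (g * h) = f g + (θ g : R) * f h

namespace IsCrossedHom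

variable {G R : Type*} [Group G]

section Ring

variable [Ring R] {θ : G →* Rˣ} {f : G → R}

theorem map_one (hf : IsCrossedHom θ f) : f 1 = 0 := by
  simpa using hf 1 1

theorem units_mul_map_inv (hf : IsCrossedHom θ f) (g : G) : (θ g : R) * f g⁻¹ = -f g := by
  have h := hf g g⁻¹
  rw [mul_inv_cancel, hf.map_one] at h
  exact eq_neg_of_add_eq_zero_right h.symm

theorem map_mul_of_eq_one (hf : IsCrossedHom θ f) {g : G} (hg : θ g = 1) (h : G) :
    f (g * h) = f g + f h := by
  rw [hf, hg, Units.val_one, one_mul]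

theorem map_inv_of_eq_one (hf : IsCrossedHom θ f) {g : G} (hg : θ g = 1) : f g⁻¹ = -f g := by
  simpa [hg] using hf.units_mul_map_inv g

theorem map_zpow_of_eq_one (hf : IsCrossedHom θ f) {g : G} (hg : θ g = 1) (n : ℤ) :
    f (g ^ n) = n * f g := by
  have hgn : ∀ n : ℤ, θ (g ^ n) = 1 := fun n => by rw [map_zpow, hg, one_zpow]
  induction n using Int.induction_on with
  | zero => simp [hf.map_one]
  | succ n ih =>
    rw [zpow_add_one, hf.map_mul_of_eq_one (hgn n), ih]
    push_cast
    rw [add_mul, one_mul]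
  | pred n ih =>
    rw [zpow_sub_one, hf.map_mul_of_eq_one (hgn _), ih, hf.map_inv_of_eq_one hg]
    push_cast
    rw [sub_mul, one_mul, sub_eq_add_neg]

theorem map_list_prod_of_forall_eq_one (hf : IsCrossedHom θ f) {l : List G}
    (hl : ∀ g ∈ l, θ g = 1) : f l.prod = (l.map f).sum := by
  induction l with
  | nil => exact hf.map_one
  | cons g l ih =>
    rw [List.prod_cons, hf.map_mul_of_eq_one (hl g List.mem_cons_self),
      ih fun g' hg' => hl g' (List.mem_cons_of_mem g hg'), List.map_cons, List.sum_cons]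

end Ring

variable [CommRing R] {θ : G →* Rˣ} {f : G → R}

theorem map_commutatorElement (hf : IsCrossedHom θ f) (g h : G) :
    f ⁅g, h⁆ = (1 - θ h) * f g + (θ g - 1) * f h := by
  have hg := hf.units_mul_map_inv g
  have hh := hf.units_mul_map_inv h
  rw [commutatorElement_def, hf, hf, hf]
  simp only [map_mul, map_inv, Units.val_mul]
  have hu : (θ g : R) * ↑(θ g)⁻¹ = 1 := Units.mul_inv _
  linear_combination (θ h : R) * hg + (θ g : R) * ↑(θ g)⁻¹ * hh - f h * hu

theorem map_iterate_commutatorElement (hf : IsCrossedHom θ f) (x : G) {c : ℕ → G}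
    (hc0 : θ (c 0) = 1) (hcs : ∀ i, c (i + 1) = ⁅x, c i⁆) (i : ℕ) :
    θ (c i) = 1 ∧ f (c i) = ((θ x : R) - 1) ^ i * f (c 0) := by
  induction i with
  | zero => simp [hc0]
  | succ i ih =>
    rw [hcs, _root_.map_commutatorElement, commutatorElement_eq_one_iff_mul_comm.mpr (mul_comm _ _),
      hf.map_commutatorElement, ih.1, ih.2]
    simp only [Units.val_one, sub_self, zero_mul, zero_add, true_and]
    ring

end IsCrossedHom

theorem stmt_13_general (p : ℕ) [Fact p.Prime]
    {F : Type*} [Group F] (θ : F →* ℤ_[p]ˣ) (x₁ y : F)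
    (q : ℤ_[p])
    (hθx : ((θ x₁ : ℤ_[p])) = 1 + q) (hθy : θ y = 1)
    (f : F → ℤ_[p])
    (hf : ∀ g h : F, f (g * h) = f g + (θ g : ℤ_[p]) * f h)
    (hfy : f y = 1)
    (m : ℕ) (a : ℕ → ℤ)
    (c : ℕ → F) (hc0 : c 0 = y) (hcs : ∀ i, c (i + 1) = ⁅x₁, c i⁆)
    (r : F)
    (hr : r = c m * (((List.range m).reverse.map fun i => c i ^ a i).prod)) :
    f r = q ^ m + ∑ i ∈ Finset.range m, (a i : ℤ_[p]) * q ^ i ∧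
      (f r = 0 →
        (Polynomial.X - Polynomial.C q) ∣
          (Polynomial.X ^ m +
            ∑ i ∈ Finset.range m, Polynomial.C ((a i : ℤ_[p])) * Polynomial.X ^ i)) := by
  have hcf : IsCrossedHom θ f := hf
  have hc (i : ℕ) : θ (c i) = 1 ∧ f (c i) = q ^ i := by
    simpa [hc0, hθx, hfy] using hcf.map_iterate_commutatorElement x₁ (hc0 ▸ hθy) hcs i
  have hfr : f r = q ^ m + ∑ i ∈ Finset.range m, (a i : ℤ_[p]) * q ^ i := by
    rw [hr, hcf.map_mul_of_eq_one (hc m).1, (hc m).2, hcf.map_list_prod_of_forall_eq_one]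
    · simp only [List.map_reverse, List.sum_reverse, List.map_map, Function.comp_def,
        hcf.map_zpow_of_eq_one (hc _).1, (hc _).2]
      rfl -- `Finset.range m` is `List.range m` underneath
    · simp [(hc _).1]
  refine ⟨hfr, fun hr0 => ?_⟩
  rw [Polynomial.dvd_iff_isRoot]
  simpa [Polynomial.eval_finsetSum, hfr] using hr0

/-- Let `q = p^k` (`k ≥ 1`), `θ` an orientation of a group `F` with
`θ x₁ = 1 + q`, `θ y = 1`, and let `f : F → ℤ_p(1)` be a crossed homomorphism with
`f y = 1`, `f x₁ = 0`.  Let `c i = [x₁,_i y]` be the iterated commutators and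
`r = [x₁,_m y]·[x₁,_{m-1} y]^{a_{m-1}} ⋯ [x₁,y]^{a_1}·y^{a_0}` the relation
corresponding to the Weierstrass polynomial `℘(X) = X^m + a_{m-1}X^{m-1} + ⋯ + a_0`
(all `a_i ∈ pℤ_p`).  Then `f r = ℘(q)`; in particular if `f r = 0` then
`℘(q) = 0`, i.e. `(X − q) ∣ ℘(X)`. -/
theorem stmt_13 (p : ℕ) [Fact p.Prime] (k : ℕ) (hk : 1 ≤ k)
    {F : Type*} [Group F] (θ : F →* ℤ_[p]ˣ) (x₁ y : F)
    (q : ℤ_[p]) (hq : q = (p : ℤ_[p]) ^ k)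
    (hθx : ((θ x₁ : ℤ_[p])) = 1 + q) (hθy : θ y = 1)
    (f : F → ℤ_[p])
    (hf : ∀ g h : F, f (g * h) = f g + (θ g : ℤ_[p]) * f h)
    (hfy : f y = 1) (hfx : f x₁ = 0)
    (m : ℕ) (a : ℕ → ℤ) (ha : ∀ i, (p : ℤ) ∣ a i)
    (c : ℕ → F) (hc0 : c 0 = y) (hcs : ∀ i, c (i + 1) = ⁅x₁, c i⁆)
    (r : F)
    (hr : r = c m * (((List.range m).reverse.map fun i => c i ^ a i).prod)) :
    f r = q ^ m + ∑ i ∈ Finset.range m, (a i : ℤ_[p]) * q ^ i ∧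
      (f r = 0 →
        (Polynomial.X - Polynomial.C q) ∣
          (Polynomial.X ^ m +
            ∑ i ∈ Finset.range m, Polynomial.C ((a i : ℤ_[p])) * Polynomial.X ^ i)) :=
  stmt_13_general p θ x₁ y q hθx hθy f hf hfy m a c hc0 hcs r hr
end

section
/- Let G be a finitely generated pro-p group such that for some closed normal subgroup Z ≅ Z_p with G/Z torsion-free, Z ⊄ Φ(C) holds for every open subgroup C ≤ G containing a finite-index subgroup of Z as C ∩ Z. Then the extension 1 → Z → G → G/Z → 1 splits: there exists a closed subgroup H ≤ G with H ∩ Z = 1 and HZ = G. -/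
open scoped commutatorElement

/-- The Frattini subgroup `Φ(C) = C^p·[C,C]` (closed subgroup topologically
generated by `p`-th powers and commutators of `C`), as a subgroup of the ambient
group. -/
def phiSub (p : ℕ) {G : Type*} [Group G] [TopologicalSpace G] [IsTopologicalGroup G]
    (C : Subgroup G) : Subgroup G :=
  (Subgroup.closure {w : G |
      (∃ c ∈ C, w = c ^ p) ∨ ∃ a ∈ C, ∃ b ∈ C, w = ⁅a, b⁆}).topologicalClosure

/-!
Fix an open subgroup `C` with `CZ = G`. Some `z ∈ C ∩ Z` lies outside the closed subgroup `Φ(C)`,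
so some open subgroup containing `Φ(C)` misses `z`; a subgroup `D` of `C` maximal among those
containing it and missing `z` is open, and since `C/D` is elementary abelian, `C = D⟨z⟩`. Hence
`DZ = G`, and iterating from `C₀ = G` gives a descending chain of open subgroups `Cₘ` with
`CₘZ = G` whose traces on `Z` strictly decrease. Through `Z ≅ ℤ_p` these traces are closed,
hence ideals of `ℤ_p`, and a strictly decreasing chain of ideals of `ℤ_p` has trivial
intersection; so `H = ⋂ Cₘ` meets `Z` trivially, while `HZ = G` by compactness.
-/

section GroupTheory

variable {G : Type*} [Group G]

theorem Subgroup.mem_of_zpow_mem_of_zpow_mem {L : Subgroup G} {c : G} {j k : ℤ}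
    (hjk : IsCoprime j k) (hj : c ^ j ∈ L) (hk : c ^ k ∈ L) : c ∈ L := by
  obtain ⟨u, v, huv⟩ := hjk
  have hc : c = (c ^ j) ^ u * (c ^ k) ^ v := by
    rw [← zpow_mul, ← zpow_mul, ← zpow_add, mul_comm j, mul_comm k, huv, zpow_one]
  rw [hc]
  exact mul_mem (zpow_mem hj u) (zpow_mem hk v)

theorem Subgroup.le_normalizer_of_commutator_mem {C M : Subgroup G}
    (hcomm : ∀ a ∈ C, ∀ b ∈ C, ⁅a, b⁆ ∈ M) (hMC : M ≤ C) :
    C ≤ Subgroup.normalizer (M : Set G) := by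
  have hconj : ∀ c ∈ C, ∀ m ∈ M, c * m * c⁻¹ ∈ M := fun c hc m hm => by
    simpa [commutatorElement_def] using mul_mem (hcomm c hc m (hMC hm)) hm
  refine fun c hc => Subgroup.mem_normalizer_iff.2 fun m => ⟨hconj c hc m, fun hm => ?_⟩
  simpa [mul_assoc] using hconj c⁻¹ (inv_mem hc) _ hm

theorem Subgroup.le_sup_zpowers_of_maximal {p : ℕ} (hp : p.Prime) {C M : Subgroup G} {z : G}
    (hpow : ∀ c ∈ C, c ^ p ∈ M) (hcomm : ∀ a ∈ C, ∀ b ∈ C, ⁅a, b⁆ ∈ M)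
    (hM : Maximal (fun K => K ≤ C ∧ z ∉ K) M) : C ≤ M ⊔ Subgroup.zpowers z := by
  intro c hc
  by_cases hcM : c ∈ M
  · exact Subgroup.mem_sup_left hcM
  have hz : z ∈ Subgroup.zpowers c ⊔ M := by
    by_contra hz
    refine hcM (hM.le_of_ge ⟨sup_le (Subgroup.zpowers_le.2 hc) hM.1.1, hz⟩ le_sup_right ?_)
    exact Subgroup.mem_sup_left (Subgroup.mem_zpowers c)
  have hnorm : Subgroup.zpowers c ≤ Subgroup.normalizer (M : Set G) :=
    Subgroup.zpowers_le.2 (Subgroup.le_normalizer_of_commutator_mem hcomm hM.1.1 hc)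
  -- `z = c ^ k * m` with `p ∤ k`, and Bezout recovers `c` from `c ^ k` and `c ^ p`.
  rw [← SetLike.mem_coe, Subgroup.coe_mul_of_left_le_normalizer_right _ _ hnorm] at hz
  obtain ⟨_, ⟨k, rfl⟩, m, hm, hzkm : c ^ k * m = z⟩ := hz
  have hk : ¬ (p : ℤ) ∣ k := by
    rintro ⟨t, rfl⟩
    refine hM.1.2 (hzkm ▸ mul_mem ?_ hm)
    simpa [zpow_mul] using zpow_mem (hpow c hc) t
  have hcp : c ^ (p : ℤ) ∈ M ⊔ Subgroup.zpowers z := by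
    rw [zpow_natCast]
    exact Subgroup.mem_sup_left (hpow c hc)
  refine Subgroup.mem_of_zpow_mem_of_zpow_mem
    ((Nat.prime_iff_prime_int.1 hp).coprime_iff_not_dvd.2 hk) hcp ?_
  rw [eq_mul_inv_of_mul_eq hzkm]
  exact mul_mem (Subgroup.mem_sup_right (Subgroup.mem_zpowers z))
    (Subgroup.mem_sup_left (inv_mem hm))

theorem Subgroup.exists_le_maximal_notMem {N C : Subgroup G} {z : G} (hNC : N ≤ C)
    (hz : z ∉ N) : ∃ M, N ≤ M ∧ Maximal (fun K => K ≤ C ∧ z ∉ K) M := by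
  refine zorn_le_nonempty₀ {K | K ≤ C ∧ z ∉ K} (fun c hc hchain K hK => ?_) N ⟨hNC, hz⟩
  refine ⟨sSup c, ⟨sSup_le fun L hL => (hc hL).1, fun hmem => ?_⟩, fun L hL => le_sSup hL⟩
  obtain ⟨L, hL, hzL⟩ := (Subgroup.mem_sSup_of_directedOn ⟨K, hK⟩ hchain.directedOn).1 hmem
  exact (hc hL).2 hzL

end GroupTheory

section Topology

variable {G : Type*} [Group G] [TopologicalSpace G]

theorem Subgroup.relIndex_inf_ne_zero_of_isOpen [SeparatelyContinuousMul G] [CompactSpace G]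
    {C : Subgroup G} (hC : IsOpen (C : Set G)) (Z : Subgroup G) : (C ⊓ Z).relIndex Z ≠ 0 := by
  have := C.quotient_finite_of_isOpen hC
  have := C.finiteIndex_of_finite_quotient
  rw [Subgroup.inf_relIndex_right]
  exact (C.isFiniteRelIndex_of_finiteIndex (K := Z)).relIndex_ne_zero

theorem Subgroup.iInf_sup_eq_top_of_antitone [IsTopologicalGroup G] [CompactSpace G]
    {Z : Subgroup G} [Z.Normal] (hZ : IsClosed (Z : Set G)) {C : ℕ → Subgroup G}
    (hC : ∀ n, IsClosed (C n : Set G)) (hanti : Antitone C) (hsup : ∀ n, C n ⊔ Z = ⊤) :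
    (⨅ n, C n) ⊔ Z = ⊤ := by
  refine eq_top_iff.2 fun g _ => ?_
  let T : ℕ → Set G := fun n => (C n : Set G) ∩ {x | x⁻¹ * g ∈ Z}
  have hT : ∀ n, (T n).Nonempty := fun n => by
    obtain ⟨c, hc, z, hz, rfl⟩ := Subgroup.mem_sup_of_normal_right.1 ((hsup n).symm ▸ mem_top g)
    exact ⟨c, hc, by simpa⟩
  have hTcl : ∀ n, IsClosed (T n) := fun n =>
    (hC n).inter (hZ.preimage (continuous_inv.mul continuous_const))
  obtain ⟨c, hc⟩ := IsCompact.nonempty_iInter_of_sequence_nonempty_isCompact_isClosed T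
    (fun n => Set.inter_subset_inter_left _ (hanti n.le_succ)) hT (hTcl 0).isCompact hTcl
  rw [Set.mem_iInter] at hc
  exact Subgroup.mem_sup_of_normal_right.2
    ⟨c, Subgroup.mem_iInf.2 fun n => (hc n).1, c⁻¹ * g, (hc 0).2, mul_inv_cancel_left c g⟩

theorem exists_isOpen_le_sup_zpowers_of_notMem_phiSub {p : ℕ} (hp : p.Prime)
    [IsTopologicalGroup G] [CompactSpace G] [TotallyDisconnectedSpace G] {C : Subgroup G}
    (hC : IsOpen (C : Set G)) {z : G} (hz : z ∉ phiSub p C) :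
    ∃ D : Subgroup G, IsOpen (D : Set G) ∧ D ≤ C ∧ z ∉ D ∧ C ≤ D ⊔ Subgroup.zpowers z := by
  set K := Subgroup.closure {w : G | (∃ c ∈ C, w = c ^ p) ∨ ∃ a ∈ C, ∃ b ∈ C, w = ⁅a, b⁆}
  have hpowK : ∀ c ∈ C, c ^ p ∈ K := fun c hc => Subgroup.subset_closure (Or.inl ⟨c, hc, rfl⟩)
  have hcommK : ∀ a ∈ C, ∀ b ∈ C, ⁅a, b⁆ ∈ K := fun a ha b hb =>
    Subgroup.subset_closure (Or.inr ⟨a, ha, b, hb, rfl⟩)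
  have hKC : K ≤ C := by
    refine (Subgroup.closure_le C).2 ?_
    rintro _ (⟨c, hc, rfl⟩ | ⟨a, ha, b, hb, rfl⟩)
    · exact pow_mem hc p
    · rw [commutatorElement_def]
      exact mul_mem (mul_mem (mul_mem ha hb) (inv_mem ha)) (inv_mem hb)
  obtain ⟨N, ⟨hNopen, hΦN⟩, hzN⟩ :
      ∃ N : Subgroup G, (IsOpen (N : Set G) ∧ phiSub p C ≤ N) ∧ z ∉ N := by
    have hΦ : phiSub p C = sInf {N : Subgroup G | IsOpen (N : Set G) ∧ phiSub p C ≤ N} :=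
      ProfiniteGrp.closedSubgroup_eq_sInf_open ⟨phiSub p C, K.isClosed_topologicalClosure⟩
    rw [hΦ, Subgroup.mem_sInf] at hz
    push Not at hz
    exact hz
  have hKN : K ≤ N ⊓ C := le_inf (K.le_topologicalClosure.trans hΦN) hKC
  obtain ⟨M, hNM, hM⟩ := Subgroup.exists_le_maximal_notMem (z := z) inf_le_right fun h => hzN h.1
  refine ⟨M, Subgroup.isOpen_mono hNM (hNopen.inter hC), hM.1.1, hM.1.2, ?_⟩
  exact Subgroup.le_sup_zpowers_of_maximal hp (fun c hc => hNM (hKN (hpowK c hc)))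
    (fun a ha b hb => hNM (hKN (hcommK a ha b hb))) hM

end Topology

namespace PadicInt

variable {p : ℕ} [Fact p.Prime]

theorem mul_mem_of_isClosed {A : AddSubgroup ℤ_[p]} (hA : IsClosed (A : Set ℤ_[p])) (r : ℤ_[p])
    {a : ℤ_[p]} (ha : a ∈ A) : r * a ∈ A :=
  denseRange_intCast.induction_on r (hA.preimage (continuous_mul_const a)) fun n => by
    simpa using zsmul_mem ha n

theorem iInf_eq_bot_of_strictAnti {I : ℕ → Ideal ℤ_[p]} (hI : StrictAnti I) : ⨅ m, I m = ⊥ := by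
  refine (Submodule.eq_bot_iff _).2 fun x hx => ?_
  by_contra hx0
  have hmem : ∀ m, x ∈ I m := (Submodule.mem_iInf _).1 hx
  choose n hn using fun m => ideal_eq_span_pow_p (s := I m) fun h => hx0 (by simpa [h] using hmem m)
  have hn_mono : StrictMono n := strictMono_nat_of_lt_succ fun m => by
    by_contra! hle
    refine (hI (Nat.lt_succ_self m)).not_ge ?_
    rw [hn, hn]
    exact Ideal.span_singleton_le_span_singleton.2 (pow_dvd_pow _ hle)
  set v := x.valuation + 1
  have hv : n v ≤ x.valuation := (mem_span_pow_iff_le_valuation x hx0 _).1 (hn v ▸ hmem v)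
  have := hn_mono.id_le v
  simp only [id] at this
  omega

theorem iInf_addSubgroup_eq_bot_of_strictAnti {A : ℕ → AddSubgroup ℤ_[p]}
    (hA : ∀ m, IsClosed (A m : Set ℤ_[p])) (hanti : StrictAnti A) : ⨅ m, A m = ⊥ := by
  let I : ℕ → Ideal ℤ_[p] := fun m =>
    { (A m).toAddSubmonoid with smul_mem' := fun r _ ha => mul_mem_of_isClosed (hA m) r ha }
  have hI : ⨅ m, I m = ⊥ := iInf_eq_bot_of_strictAnti hanti
  refine (AddSubgroup.eq_bot_iff_forall _).2 fun x hx => ?_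
  have hxI : x ∈ ⨅ m, I m := (Submodule.mem_iInf _).2 (AddSubgroup.mem_iInf.1 hx)
  rwa [hI, Submodule.mem_bot] at hxI

end PadicInt

theorem Subgroup.iInf_eq_bot_of_strictAnti_of_mulEquiv_padicInt {p : ℕ} [Fact p.Prime]
    {Z : Type*} [Group Z] [TopologicalSpace Z] [CompactSpace Z] (e : Z ≃* Multiplicative ℤ_[p])
    (he : Continuous e) {B : ℕ → Subgroup Z} (hB : ∀ m, IsClosed (B m : Set Z))
    (hanti : StrictAnti B) : ⨅ m, B m = ⊥ := by
  let F : Subgroup Z ≃o AddSubgroup ℤ_[p] := e.mapSubgroup.trans Subgroup.toAddSubgroup'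
  have hF : ∀ m, IsClosed (F (B m) : Set ℤ_[p]) := fun m =>
    ((hB m).isCompact.image (continuous_toAdd.comp he)).isClosed
  apply F.injective
  rw [F.map_iInf, F.map_bot]
  exact PadicInt.iInf_addSubgroup_eq_bot_of_strictAnti hF (F.strictMono.comp_strictAnti hanti)

section Splitting

variable {p : ℕ} [Fact p.Prime] {G : Type*} [Group G] [TopologicalSpace G]
  [IsTopologicalGroup G] [CompactSpace G] [TotallyDisconnectedSpace G] {Z : Subgroup G}

theorem exists_isOpen_sup_eq_top_subgroupOf_lt
    (hΦ : ∀ C : Subgroup G, IsOpen (C : Set G) → ¬ (C ⊓ Z ≤ phiSub p C)) {C : Subgroup G}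
    (hC : IsOpen (C : Set G)) (hCZ : C ⊔ Z = ⊤) :
    ∃ D : Subgroup G, (IsOpen (D : Set G) ∧ D ⊔ Z = ⊤) ∧ D ≤ C ∧
      D.subgroupOf Z < C.subgroupOf Z := by
  obtain ⟨z, ⟨hzC, hzZ⟩, hz⟩ := SetLike.not_le_iff_exists.1 (hΦ C hC)
  obtain ⟨D, hD, hDC, hzD, hCD⟩ :=
    exists_isOpen_le_sup_zpowers_of_notMem_phiSub (Fact.out : p.Prime) hC hz
  refine ⟨D, ⟨hD, eq_top_iff.2 ?_⟩, hDC,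
    SetLike.lt_iff_le_and_exists.2 ⟨Subgroup.subgroupOf_mono _ hDC, ⟨z, hzZ⟩, hzC, hzD⟩⟩
  calc ⊤ = C ⊔ Z := hCZ.symm
    _ ≤ D ⊔ Subgroup.zpowers z ⊔ Z := sup_le_sup_right hCD Z
    _ = D ⊔ Z := by rw [sup_assoc, sup_eq_right.2 (Subgroup.zpowers_le.2 hzZ)]

theorem exists_antitone_isOpen_sup_eq_top
    (hΦ : ∀ C : Subgroup G, IsOpen (C : Set G) → ¬ (C ⊓ Z ≤ phiSub p C)) :
    ∃ C : ℕ → Subgroup G, (∀ n, IsOpen (C n : Set G)) ∧ (∀ n, C n ⊔ Z = ⊤) ∧ Antitone C ∧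
      StrictAnti fun n => (C n).subgroupOf Z := by
  choose! next hnext using fun (C : Subgroup G) (hC : IsOpen (C : Set G) ∧ C ⊔ Z = ⊤) =>
    exists_isOpen_sup_eq_top_subgroupOf_lt hΦ hC.1 hC.2
  let C : ℕ → Subgroup G := fun n => next^[n] ⊤
  have hsucc : ∀ n, C (n + 1) = next (C n) := fun n => Function.iterate_succ_apply' next n ⊤
  have hC : ∀ n, IsOpen (C n : Set G) ∧ C n ⊔ Z = ⊤ := by
    intro n
    induction n with
    | zero => exact ⟨isOpen_univ, top_sup_eq Z⟩
    | succ n ih => exact hsucc n ▸ (hnext _ ih).1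
  refine ⟨C, fun n => (hC n).1, fun n => (hC n).2, antitone_nat_of_succ_le fun n => ?_,
    strictAnti_nat_of_succ_lt fun n => ?_⟩
  · exact hsucc n ▸ (hnext _ (hC n)).2.1
  · exact hsucc n ▸ (hnext _ (hC n)).2.2

end Splitting

theorem stmt_16_general (p : ℕ) [Fact p.Prime] {G : Type*} [Group G] [TopologicalSpace G]
    [IsTopologicalGroup G] [CompactSpace G] [TotallyDisconnectedSpace G]
    (Z : Subgroup G) [Z.Normal] (hZcl : IsClosed (Z : Set G))
    (hZiso : ∃ e : Z ≃* Multiplicative ℤ_[p], Continuous e)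
    (hΦ : ∀ C : Subgroup G, IsOpen (C : Set G) → (C ⊓ Z).relIndex Z ≠ 0 →
      ¬ (C ⊓ Z ≤ phiSub p C)) :
    ∃ H : Subgroup G, IsClosed (H : Set G) ∧ H ⊓ Z = ⊥ ∧
      ∀ g : G, ∃ h ∈ H, ∃ z ∈ Z, g = h * z := by
  obtain ⟨e, he⟩ := hZiso
  obtain ⟨C, hCopen, hCsup, hanti, hstrict⟩ := exists_antitone_isOpen_sup_eq_top
    fun C hC => hΦ C hC (Subgroup.relIndex_inf_ne_zero_of_isOpen hC Z)
  have hCclosed : ∀ n, IsClosed (C n : Set G) := fun n => (C n).isClosed_of_isOpen (hCopen n)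
  have : CompactSpace Z := isCompact_iff_compactSpace.1 hZcl.isCompact
  refine ⟨⨅ n, C n, by simpa only [Subgroup.coe_iInf] using isClosed_iInter hCclosed, ?_,
    fun g => ?_⟩
  · rw [← disjoint_iff, ← Subgroup.subgroupOf_eq_bot, Subgroup.subgroupOf, Subgroup.comap_iInf]
    exact Subgroup.iInf_eq_bot_of_strictAnti_of_mulEquiv_padicInt e he
      (fun n => (hCclosed n).preimage continuous_subtype_val) hstrict
  · have hg : g ∈ (⨅ n, C n) ⊔ Z := by
      rw [Subgroup.iInf_sup_eq_top_of_antitone hZcl hCclosed hanti hCsup]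
      exact Subgroup.mem_top g
    obtain ⟨h, hh, z, hz, rfl⟩ := Subgroup.mem_sup_of_normal_right.1 hg
    exact ⟨h, hh, z, hz, rfl⟩

/-- Let `G` be a finitely generated pro-`p` group, `Z ≅ ℤ_p` a closed normal
subgroup with `G/Z` torsion-free, such that `C ∩ Z ⊄ Φ(C)` for every open subgroup
`C ≤ G` containing a finite-index subgroup of `Z` as `C ∩ Z`.  Then the extension
`1 → Z → G → G/Z → 1` splits: there is a closed subgroup `H ≤ G` with `H ∩ Z = 1`
and `H·Z = G`. -/
theorem stmt_16 (p : ℕ) [Fact p.Prime] {G : Type*} [Group G] [TopologicalSpace G]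
    [IsTopologicalGroup G] [CompactSpace G] [T2Space G] [TotallyDisconnectedSpace G]
    (hfg : ∃ S : Finset G, Dense ((Subgroup.closure (S : Set G) : Subgroup G) : Set G))
    (Z : Subgroup G) [Z.Normal] (hZcl : IsClosed (Z : Set G))
    (hZiso : ∃ e : Z ≃* Multiplicative ℤ_[p], Continuous e)
    (htf : ∀ x : G ⧸ Z, ∀ n : ℕ, 0 < n → x ^ n = 1 → x = 1)
    (hΦ : ∀ C : Subgroup G, IsOpen (C : Set G) → (C ⊓ Z).relIndex Z ≠ 0 →
      ¬ (C ⊓ Z ≤ phiSub p C)) :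
    ∃ H : Subgroup G, IsClosed (H : Set G) ∧ H ⊓ Z = ⊥ ∧
      ∀ g : G, ∃ h ∈ H, ∃ z ∈ Z, g = h * z :=
  stmt_16_general p Z hZcl hZiso hΦ
end

section
/- Let G = A ⋊ Z be a semidirect product of pro-p groups where Z ≅ Z_p^d is abelian, A acts on Z through a character θ: A → 1 + p^k Z_p ⊆ Z_p^× (i.e., a·z·a^{-1} = z^{θ(a)}), and k ≥ 1 (k ≥ 2 if p = 2). Then Z is contained in the θ̃-centre of G, where θ̃: G → Z_p^× extends θ trivially on Z; moreover Z_θ̃(G) = Z_θ(A) × Z. -/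
/-! Everything reduces to one conjugation formula in `N ⋊[φ] A` with `N` abelian: if `φ` is
trivial on `h.right`, hence on all its conjugates, then conjugating `h` by `g` acts on the
`N`-component through `φ g.right` alone, since the `g.left`-factors cancel. Elements of `Z`
and elements with `θ h.right = 1` are of this kind, because `A` acts on `Z` through `θ`. -/

namespace SemidirectProduct

variable {N A : Type*} [CommGroup N] [Group A] {φ : A →* MulAut N}

theorem mul_mul_inv_eq_of_right_mem_ker (g h : N ⋊[φ] A) (hh : h.right ∈ φ.ker) :
    g * h * g⁻¹ = ⟨φ g.right h.left, g.right * h.right * g.right⁻¹⟩ := by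
  have hconj : φ (g.right * h.right * g.right⁻¹) = 1 :=
    φ.normal_ker.conj_mem _ hh _
  ext
  · calc (g * h * g⁻¹).left
        = g.left * φ g.right h.left * φ (g.right * h.right * g.right⁻¹) g.left⁻¹ := by
          simp only [mul_left, mul_right, inv_left, map_mul, MulAut.mul_apply]
      _ = φ g.right h.left := by rw [hconj, MulAut.one_apply, mul_inv_cancel_comm]
  · rfl

theorem mul_inl_mul_inv (g : N ⋊[φ] A) (z : N) :
    g * inl z * g⁻¹ = inl (φ g.right z) := by
  rw [mul_mul_inv_eq_of_right_mem_ker g (inl z) (by simp)]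
  ext <;> simp

end SemidirectProduct

theorem MulAut.mem_ker_of_smul_eq_one {R M A : Type*} [Semiring R] [AddCommMonoid M]
    [Module R M] [Group A] {θ : A →* Rˣ} {φ : A →* MulAut (Multiplicative M)}
    (hφ : ∀ a z, φ a z = Multiplicative.ofAdd ((θ a : R) • Multiplicative.toAdd z))
    {a : A} (ha : θ a = 1) : a ∈ φ.ker := by
  ext z
  simp [hφ, ha]

theorem stmt_17_general (p : ℕ) [Fact p.Prime] (d : ℕ)
    {A : Type*} [Group A] (θ : A →* ℤ_[p]ˣ)
    (φ : A →* MulAut (Multiplicative (Fin d → ℤ_[p])))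
    (hφ : ∀ (a : A) (z : Multiplicative (Fin d → ℤ_[p])),
      φ a z = Multiplicative.ofAdd (((θ a : ℤ_[p])) • Multiplicative.toAdd z))
    (PA : A → ℤ_[p] → A) :
    (∀ z : Multiplicative (Fin d → ℤ_[p]),
      θ ((SemidirectProduct.inl z : Multiplicative (Fin d → ℤ_[p]) ⋊[φ] A).right) = 1 ∧
      ∀ g : Multiplicative (Fin d → ℤ_[p]) ⋊[φ] A,
        g * SemidirectProduct.inl z * g⁻¹ =
          SemidirectProduct.inl
            (Multiplicative.ofAdd (((θ g.right : ℤ_[p])) • Multiplicative.toAdd z)))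
    ∧
    (∀ h : Multiplicative (Fin d → ℤ_[p]) ⋊[φ] A,
      (θ h.right = 1 ∧
        ∀ g : Multiplicative (Fin d → ℤ_[p]) ⋊[φ] A,
          g * h * g⁻¹ =
            ⟨Multiplicative.ofAdd (((θ g.right : ℤ_[p])) • Multiplicative.toAdd h.left),
              PA h.right ((θ g.right : ℤ_[p]))⟩)
      ↔
      (θ h.right = 1 ∧ ∀ b : A, b * h.right * b⁻¹ = PA h.right ((θ b : ℤ_[p])))) := by
  refine ⟨fun z => ⟨by simp, fun g => ?_⟩, fun h => ⟨?_, ?_⟩⟩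
  · rw [SemidirectProduct.mul_inl_mul_inv, hφ]
  · rintro ⟨hθh, hconj⟩
    exact ⟨hθh, fun b => by simpa using congrArg SemidirectProduct.right (hconj (.inr b))⟩
  · rintro ⟨hθh, hconj⟩
    refine ⟨hθh, fun g => ?_⟩
    rw [SemidirectProduct.mul_mul_inv_eq_of_right_mem_ker g h
      (MulAut.mem_ker_of_smul_eq_one hφ hθh), hφ, hconj]

/-- Cyclotomic fibre products enlarge the θ-centre.  Let `G = Z ⋊ A` be a
semidirect product of pro-`p` groups with `Z ≅ ℤ_p^d` abelian, where `A` acts on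
`Z` through a character `θ : A → 1 + p^k ℤ_p ⊆ ℤ_pˣ` (`a z a⁻¹ = z^{θ a}`,
i.e. `φ a z = θ a • z`), with `k ≥ 1` (`k ≥ 2` if `p = 2`).  Write `θ̃` for the
extension of `θ` to `G` trivial on `Z`, and let `PA` denote the `p`-adic power map
on `A` (extending integral powers).  Then:
* `Z` is contained in the `θ̃`-centre of `G`, i.e. every `z ∈ Z` lies in `ker θ̃`
  and satisfies `g z g⁻¹ = z^{θ̃ g}` for all `g ∈ G`; and
* `Z_{θ̃}(G) = Z_θ(A) × Z`: an element `h = (z, a)` of `G` lies in the `θ̃`-centre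
  (meaning `θ̃ h = 1` and `g h g⁻¹ = h^{θ̃ g}` for all `g`) if and only if its
  `A`-component `a` lies in the `θ`-centre of `A`. -/
theorem stmt_17 (p : ℕ) [Fact p.Prime] (d k : ℕ) (hk : 1 ≤ k)
    (hk2 : p = 2 → 2 ≤ k)
    {A : Type*} [Group A] (θ : A →* ℤ_[p]ˣ)
    (hθ : ∀ a : A, ∃ c : ℤ_[p], ((θ a : ℤ_[p])) = 1 + (p : ℤ_[p]) ^ k * c)
    (φ : A →* MulAut (Multiplicative (Fin d → ℤ_[p])))
    (hφ : ∀ (a : A) (z : Multiplicative (Fin d → ℤ_[p])),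
      φ a z = Multiplicative.ofAdd (((θ a : ℤ_[p])) • Multiplicative.toAdd z))
    (PA : A → ℤ_[p] → A)
    (hPAint : ∀ (a : A) (n : ℤ), PA a ((n : ℤ_[p])) = a ^ n)
    (hPAadd : ∀ (a : A) (c c' : ℤ_[p]), PA a (c + c') = PA a c * PA a c')
    (hPA1 : ∀ c : ℤ_[p], PA 1 c = 1) :
    (∀ z : Multiplicative (Fin d → ℤ_[p]),
      θ ((SemidirectProduct.inl z : Multiplicative (Fin d → ℤ_[p]) ⋊[φ] A).right) = 1 ∧
      ∀ g : Multiplicative (Fin d → ℤ_[p]) ⋊[φ] A,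
        g * SemidirectProduct.inl z * g⁻¹ =
          SemidirectProduct.inl
            (Multiplicative.ofAdd (((θ g.right : ℤ_[p])) • Multiplicative.toAdd z)))
    ∧
    (∀ h : Multiplicative (Fin d → ℤ_[p]) ⋊[φ] A,
      (θ h.right = 1 ∧
        ∀ g : Multiplicative (Fin d → ℤ_[p]) ⋊[φ] A,
          g * h * g⁻¹ =
            ⟨Multiplicative.ofAdd (((θ g.right : ℤ_[p])) • Multiplicative.toAdd h.left),
              PA h.right ((θ g.right : ℤ_[p]))⟩)
      ↔
      (θ h.right = 1 ∧ ∀ b : A, b * h.right * b⁻¹ = PA h.right ((θ b : ℤ_[p])))) :=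
  stmt_17_general p d θ φ hφ PA
end
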